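/- Define F(c) = 1/(1 - e^{-cA}) - 1/(cA) for c ≠ 0, A > 0 fixed. Then F is strictly increasing on (0, ∞). -/

import Mathlib

/-!
With `f x = 1 / (1 - e^{-x}) - 1 / x` the function is `c ↦ f (c * A)`, so it suffices that `f` is
strictly increasing on `(0, ∞)`. Its derivative `1 / x² - e^{-x} / (1 - e^{-x})²` is positive
because `1 - e^{-x} = e^{-x/2} · 2 sinh (x / 2)` and `2 sinh (x / 2) > x` for `x > 0`.
-/

open Real

lemma one_sub_exp_neg_eq_exp_neg_half_mul_sinh (x : ℝ) :
    1 - exp (-x) = exp (-(x / 2)) * (2 * sinh (x / 2)) := by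
  rw [sinh_eq, mul_div_cancel₀ _ two_ne_zero, mul_sub, ← exp_add, ← exp_add]
  ring_nf
  simp [sub_eq_neg_add]

lemma sq_mul_exp_neg_lt_one_sub_exp_neg_sq {x : ℝ} (hx : 0 < x) :
    x ^ 2 * exp (-x) < (1 - exp (-x)) ^ 2 := by
  have h_sinh : x < 2 * sinh (x / 2) := by linarith [self_lt_sinh_iff.mpr (half_pos hx)]
  have h_exp : exp (-x) = exp (-(x / 2)) ^ 2 := by
    rw [← exp_nat_mul]
    ring_nf
  rw [one_sub_exp_neg_eq_exp_neg_half_mul_sinh, h_exp, mul_pow, mul_comm]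
  gcongr

lemma hasDerivAt_one_div_one_sub_exp_neg_sub_one_div {x : ℝ} (hx : x ≠ 0) :
    HasDerivAt (fun x : ℝ => 1 / (1 - exp (-x)) - 1 / x)
      (1 / x ^ 2 - exp (-x) / (1 - exp (-x)) ^ 2) x := by
  have h_denom : 1 - exp (-x) ≠ 0 :=
    sub_ne_zero.mpr fun h => hx (neg_eq_zero.mp ((exp_eq_one_iff _).mp h.symm))
  simp only [one_div]
  exact (((((hasDerivAt_neg x).exp).const_sub 1).fun_inv h_denom).fun_sub
    (hasDerivAt_inv hx)).congr_deriv (by ring)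

lemma strictMonoOn_one_div_one_sub_exp_neg_sub_one_div :
    StrictMonoOn (fun x : ℝ => 1 / (1 - exp (-x)) - 1 / x) (Set.Ioi 0) := by
  refine strictMonoOn_of_deriv_pos (convex_Ioi 0) (fun x hx => ?_) fun x hx => ?_
  · exact (hasDerivAt_one_div_one_sub_exp_neg_sub_one_div (ne_of_gt hx)).continuousAt
      |>.continuousWithinAt
  · rw [interior_Ioi, Set.mem_Ioi] at hx
    rw [(hasDerivAt_one_div_one_sub_exp_neg_sub_one_div hx.ne').deriv, sub_pos]
    have h_denom : 0 < 1 - exp (-x) := sub_pos.mpr (exp_lt_one_iff.mpr (neg_neg_of_pos hx))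
    rw [div_lt_div_iff₀ (by positivity) (by positivity)]
    linarith [sq_mul_exp_neg_lt_one_sub_exp_neg_sq hx]

/-- F(c) = 1/(1 - e^{-cA}) - 1/(cA) is strictly increasing
on (0, ∞), for fixed A > 0. -/
theorem F_strictMonoOn (A : ℝ) (hA : 0 < A) :
    StrictMonoOn (fun c : ℝ => 1/(1 - Real.exp (-(c*A))) - 1/(c*A))
      (Set.Ioi 0) :=
  strictMonoOn_one_div_one_sub_exp_neg_sub_one_div.comp
    ((strictMono_mul_right_of_pos hA).strictMonoOn _) fun _ hc => mul_pos hc hA
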